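/- Let C ⊆ {0,1}^N, let x ∈ C, let λ ∈ ℝ^N, and let B ⊆ [0,1]^N be a finite set such that ⟨λ, x ⊕ β⟩ > ⟨λ, x⟩ for every β ∈ B. Suppose that for every x' ∈ C with x' ≠ x there exist α ∈ (0,1] and a probability distribution μ on B such that E_{β ∼ μ}[β] = α·(x ⊕ x'). Then ⟨λ, x'⟩ > ⟨λ, x⟩ for every x' ∈ C with x' ≠ x; in particular x is the unique minimizer of ⟨λ, ·⟩ over C. -/
import Mathlib


open Finset

/-- **Abstract local-optimality certificate.**
Let `C ⊆ {0,1}^N`, `x ∈ C`, `λ ∈ ℝ^N`, and let `B ⊆ [0,1]^N` be a finite set with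
`⟨λ, x ⊕ β⟩ > ⟨λ, x⟩` for every `β ∈ B`. If for every `x' ∈ C` with `x' ≠ x` there are
`α ∈ (0,1]` and a probability distribution `μ` on `B` with `E_{β∼μ}[β] = α·(x ⊕ x')`,
then `⟨λ, x'⟩ > ⟨λ, x⟩` for every `x' ∈ C` with `x' ≠ x`; in particular `x` is the
unique minimizer of `⟨λ, ·⟩` over `C`. -/
theorem unique_minimizer_of_certificate {N : ℕ} (C : Set (Fin N → ℝ))
    (hC : ∀ y ∈ C, ∀ i, y i = 0 ∨ y i = 1)
    (x : Fin N → ℝ) (hxC : x ∈ C) (lam : Fin N → ℝ)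
    (B : Finset (Fin N → ℝ)) (hB : ∀ β ∈ B, ∀ i, 0 ≤ β i ∧ β i ≤ 1)
    (hopt : ∀ β ∈ B, (∑ i, lam i * |x i - β i|) > ∑ i, lam i * x i)
    (hdecomp : ∀ x' ∈ C, x' ≠ x →
      ∃ α : ℝ, 0 < α ∧ α ≤ 1 ∧
        ∃ μ : (Fin N → ℝ) → ℝ, (∀ β ∈ B, 0 ≤ μ β) ∧ (∑ β ∈ B, μ β) = 1 ∧
          ∀ i, (∑ β ∈ B, μ β * β i) = α * |x i - x' i|) :
    ∀ x' ∈ C, x' ≠ x → (∑ i, lam i * x' i) > ∑ i, lam i * x i := by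
  intro x' hx'C hne
  obtain ⟨α, hα0, hα1, μ, hμ0, hμ1, hμE⟩ := hdecomp x' hx'C hne
  have habs : ∀ i, ∀ b : ℝ, 0 ≤ b → b ≤ 1 → |x i - b| = x i + (1 - 2 * x i) * b := by
    intro i b hb0 hb1
    rcases hC x hxC i with h | h <;> rw [h]
    · rw [zero_sub, abs_neg, abs_of_nonneg hb0]; ring
    · rw [abs_of_nonneg (by linarith)]; ring
  have hg : ∀ β ∈ B, 0 < ∑ i, lam i * (1 - 2 * x i) * β i := by
    intro β hβ
    have h := hopt β hβ
    have heq : (∑ i, lam i * |x i - β i|)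
        = (∑ i, lam i * x i) + ∑ i, lam i * (1 - 2 * x i) * β i := by
      rw [← Finset.sum_add_distrib]
      refine Finset.sum_congr rfl fun i _ => ?_
      rw [habs i (β i) (hB β hβ i).1 (hB β hβ i).2]; ring
    linarith
  have hpos : 0 < ∑ β ∈ B, μ β * ∑ i, lam i * (1 - 2 * x i) * β i := by
    obtain ⟨β0, hβ0B, hβ0pos⟩ : ∃ β ∈ B, 0 < μ β := by
      by_contra h
      push_neg at h
      have hz : (∑ β ∈ B, μ β) = 0 :=
        Finset.sum_eq_zero fun β hβ => le_antisymm (h β hβ) (hμ0 β hβ)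
      rw [hμ1] at hz; norm_num at hz
    refine Finset.sum_pos' (fun β hβ => mul_nonneg (hμ0 β hβ) (hg β hβ).le)
      ⟨β0, hβ0B, mul_pos hβ0pos (hg β0 hβ0B)⟩
  have hswap : (∑ β ∈ B, μ β * ∑ i, lam i * (1 - 2 * x i) * β i)
      = ∑ i, lam i * (1 - 2 * x i) * (α * |x i - x' i|) := by
    calc (∑ β ∈ B, μ β * ∑ i, lam i * (1 - 2 * x i) * β i)
        = ∑ β ∈ B, ∑ i, lam i * (1 - 2 * x i) * (μ β * β i) := by
          refine Finset.sum_congr rfl fun β _ => ?_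
          rw [Finset.mul_sum]
          exact Finset.sum_congr rfl fun i _ => by ring
      _ = ∑ i, ∑ β ∈ B, lam i * (1 - 2 * x i) * (μ β * β i) := Finset.sum_comm
      _ = ∑ i, lam i * (1 - 2 * x i) * (∑ β ∈ B, μ β * β i) := by
          refine Finset.sum_congr rfl fun i _ => ?_
          rw [Finset.mul_sum]
      _ = ∑ i, lam i * (1 - 2 * x i) * (α * |x i - x' i|) := by
          refine Finset.sum_congr rfl fun i _ => ?_
          rw [hμE i]
  have hfinal : (∑ i, lam i * (1 - 2 * x i) * (α * |x i - x' i|))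
      = α * ∑ i, lam i * (x' i - x i) := by
    rw [Finset.mul_sum]
    refine Finset.sum_congr rfl fun i _ => ?_
    rcases hC x hxC i with h | h <;> rcases hC x' hx'C i with h' | h' <;>
      rw [h, h'] <;> norm_num <;> ring
  have hsum : (∑ i, lam i * (x' i - x i))
      = (∑ i, lam i * x' i) - ∑ i, lam i * x i := by
    rw [← Finset.sum_sub_distrib]
    exact Finset.sum_congr rfl fun i _ => by ring
  rw [hswap, hfinal, hsum] at hpos
  nlinarith [hpos, hα0]
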